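/- arXiv:2203.16968 — 4 statements merged into one kernel-verified Lean document; each statement's English description precedes it below -/
import Mathlib

section
/- With ζ̃ as above (defined by (2/3)(−ζ̃(ρ))^{3/2} = √(ρ²−1) − arccos(1/ρ) for ρ > 1), one has lim_{ρ→1⁺} (−ζ̃(ρ))/(ρ−1) = 2^{1/3}. -/
open Real Set Filter

noncomputable def fA (ρ : ℝ) : ℝ := Real.sqrt (ρ^2 - 1) - Real.arccos (1/ρ)
noncomputable def gA (ρ : ℝ) : ℝ := (ρ - 1) ^ ((3:ℝ)/2)
noncomputable def fA' (ρ : ℝ) : ℝ := ρ / Real.sqrt (ρ^2 - 1) - 1 / (ρ^2 * Real.sqrt (1 - (1/ρ)^2))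
noncomputable def gA' (ρ : ℝ) : ℝ := (3/2) * (ρ - 1) ^ ((1:ℝ)/2)

lemma hfd {ρ : ℝ} (hρ : 1 < ρ) : HasDerivAt fA (fA' ρ) ρ := by
  have hρ0 : 0 < ρ := lt_trans one_pos hρ
  have h1 : (1:ℝ) < ρ^2 := by nlinarith
  have hsub : ρ^2 - 1 ≠ 0 := by nlinarith
  have hsq : HasDerivAt (fun x : ℝ => Real.sqrt (x^2 - 1)) (ρ / Real.sqrt (ρ^2 - 1)) ρ := by
    have h0 : HasDerivAt (fun x : ℝ => x^2 - 1) (2*ρ) ρ := by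
      simpa using ((hasDerivAt_pow 2 ρ).sub_const 1)
    have := (Real.hasDerivAt_sqrt hsub).comp ρ h0
    refine this.congr_deriv ?_
    field_simp
  have hinv : HasDerivAt (fun x : ℝ => 1/x) (-(1/ρ^2)) ρ := by
    simpa [one_div] using (hasDerivAt_inv (ne_of_gt hρ0))
  have h1ρ : 1/ρ < 1 := by rw [div_lt_one hρ0]; exact hρ
  have h1ρ' : (0:ℝ) < 1/ρ := by positivity
  have harc : HasDerivAt (fun x : ℝ => Real.arccos (1/x))
      (-(1 / Real.sqrt (1 - (1/ρ)^2)) * (-(1/ρ^2))) ρ :=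
    (Real.hasDerivAt_arccos (by linarith) (ne_of_lt h1ρ)).comp ρ hinv
  have := hsq.sub harc
  refine this.congr_deriv ?_
  unfold fA'
  field_simp
lemma hgd {ρ : ℝ} (hρ : 1 < ρ) : HasDerivAt gA (gA' ρ) ρ := by
  have h0 : ρ - 1 ≠ 0 := by linarith
  have h1 : HasDerivAt (fun x : ℝ => x - 1) 1 ρ := (hasDerivAt_id ρ).sub_const 1
  have := (Real.hasDerivAt_rpow_const (x := ρ - 1) (p := (3:ℝ)/2) (Or.inl h0)).comp ρ h1
  refine this.congr_deriv ?_
  unfold gA'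
  norm_num

lemma hsimp {ρ : ℝ} (hρ : 1 < ρ) : fA' ρ / gA' ρ = 2/3 * Real.sqrt (ρ+1) / ρ := by
  have hρ0 : 0 < ρ := lt_trans one_pos hρ
  have h1 : 0 < ρ - 1 := by linarith
  have h2 : 0 < ρ + 1 := by linarith
  have hsqrt : Real.sqrt (ρ^2-1) = Real.sqrt (ρ-1) * Real.sqrt (ρ+1) := by
    rw [show ρ^2-1 = (ρ-1)*(ρ+1) by ring, Real.sqrt_mul h1.le]
  have hone : Real.sqrt (1 - (1/ρ)^2) = Real.sqrt (ρ^2-1) / ρ := by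
    rw [show 1 - (1/ρ)^2 = (ρ^2-1)/ρ^2 by field_simp, Real.sqrt_div (by nlinarith), Real.sqrt_sq hρ0.le]
  have hrpow : (ρ-1) ^ ((1:ℝ)/2) = Real.sqrt (ρ-1) := (Real.sqrt_eq_rpow (ρ-1)).symm
  have hp1 : 0 < Real.sqrt (ρ-1) := Real.sqrt_pos.2 h1
  have hp2 : 0 < Real.sqrt (ρ+1) := Real.sqrt_pos.2 h2
  have hs : Real.sqrt (ρ^2-1) * Real.sqrt (ρ^2-1) = ρ^2-1 := Real.mul_self_sqrt (by nlinarith)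
  have hspos : 0 < Real.sqrt (ρ^2-1) := Real.sqrt_pos.2 (by nlinarith)
  have key : fA' ρ = Real.sqrt (ρ^2-1) / ρ := by
    unfold fA'
    rw [hone]
    field_simp
    linear_combination -hs
  unfold gA'
  rw [key, hsqrt, hrpow]
  field_simp

lemma hdivlim : Tendsto (fun ρ => fA' ρ / gA' ρ) (nhdsWithin 1 (Set.Ioi 1)) (nhds (2/3 * Real.sqrt 2)) := by
  have hc : ContinuousAt (fun ρ : ℝ => 2/3 * Real.sqrt (ρ+1) / ρ) 1 := by
    have h1 : ContinuousAt (fun ρ : ℝ => Real.sqrt (ρ+1)) 1 :=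
      (Real.continuous_sqrt.comp (continuous_id.add continuous_const)).continuousAt
    exact (h1.const_mul _).div continuousAt_id one_ne_zero
  have h2 := hc.tendsto.mono_left (nhdsWithin_le_nhds (s := Set.Ioi (1:ℝ)))
  norm_num at h2
  apply Tendsto.congr' _ h2
  filter_upwards [self_mem_nhdsWithin] with ρ hρ using (hsimp hρ).symm

lemma hfg : Tendsto (fun ρ => fA ρ / gA ρ) (nhdsWithin 1 (Set.Ioi 1)) (nhds (2/3 * Real.sqrt 2)) := by
  apply HasDerivAt.lhopital_zero_nhdsGT (f' := fA') (g' := gA')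
  · filter_upwards [self_mem_nhdsWithin] with ρ hρ using hfd hρ
  · filter_upwards [self_mem_nhdsWithin] with ρ hρ using hgd hρ
  · filter_upwards [self_mem_nhdsWithin] with ρ hρ
    have h1 : (0:ℝ) < ρ - 1 := by simpa using sub_pos.2 (Set.mem_Ioi.mp hρ)
    unfold gA'
    positivity
  · have hc : ContinuousAt fA 1 := by
      unfold fA
      apply ContinuousAt.sub
      · exact (Real.continuous_sqrt.comp (by continuity)).continuousAt
      · exact Real.continuous_arccos.continuousAt.comp
          (continuousAt_const.div continuousAt_id one_ne_zero)
    have h2 := hc.tendsto.mono_left (nhdsWithin_le_nhds (s := Set.Ioi (1:ℝ)))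
    have h3 : fA 1 = 0 := by simp [fA]
    rwa [h3] at h2
  · have hc : ContinuousAt gA 1 := by
      unfold gA
      exact (Real.continuousAt_rpow_const _ _ (Or.inr (by norm_num))).comp
        ((continuous_id.sub continuous_const).continuousAt)
    have h2 := hc.tendsto.mono_left (nhdsWithin_le_nhds (s := Set.Ioi (1:ℝ)))
    have h3 : gA 1 = 0 := by simp [gA]
    rwa [h3] at h2
  · exact hdivlim

/-- With ζ̃ defined on (1,∞) by (2/3)(−ζ̃(ρ))^{3/2} = √(ρ²−1) − arccos(1/ρ)
(and ζ̃ < 0 there), one has lim_{ρ→1⁺} (−ζ̃(ρ))/(ρ−1) = 2^{1/3}. -/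
theorem stmt_2 (ζ : ℝ → ℝ)
    (hneg : ∀ ρ > (1:ℝ), ζ ρ < 0)
    (hdef : ∀ ρ > (1:ℝ),
      (2/3) * (-ζ ρ) ^ ((3:ℝ)/2) = Real.sqrt (ρ^2 - 1) - Real.arccos (1/ρ)) :
    Filter.Tendsto (fun ρ => (-ζ ρ) / (ρ - 1)) (nhdsWithin 1 (Set.Ioi 1))
      (nhds ((2:ℝ) ^ ((1:ℝ)/3))) := by
  have hlim : Tendsto (fun ρ => 3/2 * fA ρ / gA ρ) (nhdsWithin 1 (Set.Ioi 1)) (nhds (Real.sqrt 2)) := by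
    have := hfg.const_mul (3/2 : ℝ)
    have hv : (3/2 : ℝ) * (2/3 * Real.sqrt 2) = Real.sqrt 2 := by ring
    rw [hv] at this
    simpa [mul_div_assoc] using this
  have hsqrt2 : (0:ℝ) < Real.sqrt 2 := by positivity
  have hcomp := (Real.continuousAt_rpow_const _ ((2:ℝ)/3) (Or.inl hsqrt2.ne')).tendsto.comp hlim
  have hval : (Real.sqrt 2) ^ ((2:ℝ)/3) = (2:ℝ) ^ ((1:ℝ)/3) := by
    rw [Real.sqrt_eq_rpow, ← Real.rpow_mul (by norm_num : (0:ℝ) ≤ 2)]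
    norm_num
  rw [hval] at hcomp
  apply Tendsto.congr' _ hcomp
  filter_upwards [self_mem_nhdsWithin] with ρ hρ
  have hρ1 : (1:ℝ) < ρ := hρ
  have hz : 0 < -ζ ρ := neg_pos.2 (hneg ρ hρ1)
  have h32 : (-ζ ρ) ^ ((3:ℝ)/2) = 3/2 * fA ρ := by
    have hd := hdef ρ hρ1
    unfold fA
    linarith
  have hnum : -ζ ρ = (3/2 * fA ρ) ^ ((2:ℝ)/3) := by
    rw [← h32, ← Real.rpow_mul hz.le]
    norm_num
  have hden : ρ - 1 = (gA ρ) ^ ((2:ℝ)/3) := by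
    unfold gA
    rw [← Real.rpow_mul (by linarith : (0:ℝ) ≤ ρ - 1)]
    norm_num
  have hgpos : 0 < gA ρ := Real.rpow_pos_of_pos (by linarith) _
  have hnn : 0 ≤ 3/2 * fA ρ := by rw [← h32]; positivity
  show (fun x : ℝ => x ^ ((2:ℝ)/3)) (3/2 * fA ρ / gA ρ) = (-ζ ρ) / (ρ - 1)
  simp only
  rw [Real.div_rpow hnn hgpos.le, ← hnum, ← hden]
end

section
/- Let α, γ ∈ ℝ with α > 0 and let ζ̃ solve −ζ̃(ρ)(ζ̃'(ρ))² = 1 − 1/ρ². Then the pair ι(y,z,α,γ) = yα + zγ and ζ(x,α,γ) = α^{2/3} ζ̃((1+x)√(1−γ²)/α) satisfies the system: (∂_x ι)² + (1+x)^{-2}(∂_y ι)² + (∂_z ι)² − ζ·((∂_x ζ)² + (1+x)^{-2}(∂_y ζ)² + (∂_z ζ)²) = 1, and ∂_x ι ∂_x ζ + (1+x)^{-2} ∂_y ι ∂_y ζ + ∂_z ι ∂_z ζ = 0. -/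
open Real

/-- The pair ι(y,z) = yα + zγ, ζ(x) = α^{2/3} ζ̃((1+x)√(1−γ²)/α) solves the
Melrose–Taylor eikonal system, given that ζ̃ solves −ζ̃(ρ)(ζ̃'(ρ))² = 1 − 1/ρ². -/
theorem stmt_4 (α γ : ℝ) (hα : 0 < α) (hγ0 : 0 < γ^2) (hγ1 : γ^2 < 1)
    (ζt : ℝ → ℝ) (hdiff : Differentiable ℝ ζt)
    (hode : ∀ ρ : ℝ, 0 < ρ → -ζt ρ * (deriv ζt ρ)^2 = 1 - 1/ρ^2)
    (ι : ℝ → ℝ → ℝ → ℝ) (hι : ∀ x y z, ι x y z = y*α + z*γ)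
    (ζ : ℝ → ℝ → ℝ → ℝ)
    (hζ : ∀ x y z, ζ x y z = α ^ ((2:ℝ)/3) * ζt ((1+x) * Real.sqrt (1-γ^2) / α))
    (x y z : ℝ) (hx : -1 < x) :
    ((deriv (fun t => ι t y z) x)^2
        + ((1+x)^2)⁻¹ * (deriv (fun t => ι x t z) y)^2
        + (deriv (fun t => ι x y t) z)^2
      - ζ x y z * ((deriv (fun t => ζ t y z) x)^2
        + ((1+x)^2)⁻¹ * (deriv (fun t => ζ x t z) y)^2
        + (deriv (fun t => ζ x y t) z)^2) = 1) ∧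
    (deriv (fun t => ι t y z) x * deriv (fun t => ζ t y z) x
      + ((1+x)^2)⁻¹ * (deriv (fun t => ι x t z) y * deriv (fun t => ζ x t z) y)
      + deriv (fun t => ι x y t) z * deriv (fun t => ζ x y t) z = 0) := by
 
  set s := Real.sqrt (1-γ^2) with hs
  have hs0 : 0 < s := Real.sqrt_pos.mpr (by linarith)
  have hx0 : 0 < 1 + x := by linarith
  set ρ := (1+x) * s / α with hρ
  have hρ0 : 0 < ρ := by positivity
  -- ι derivatives
  have dι1 : deriv (fun t => ι t y z) x = 0 := by
    have : (fun t => ι t y z) = fun _ => y*α + z*γ := funext fun t => hι t y z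
    rw [this]; exact deriv_const _ _
  have dι2 : deriv (fun t => ι x t z) y = α := by
    have : (fun t => ι x t z) = fun t => t*α + z*γ := funext fun t => hι x t z
    rw [this]
    have h : HasDerivAt (fun t : ℝ => t*α + z*γ) α y := by
      simpa using ((hasDerivAt_id y).mul_const α).add_const (z*γ)
    exact h.deriv
  have dι3 : deriv (fun t => ι x y t) z = γ := by
    have : (fun t => ι x y t) = fun t => y*α + t*γ := funext fun t => hι x y t
    rw [this]
    have h : HasDerivAt (fun t : ℝ => y*α + t*γ) γ z := by
      simpa using (((hasDerivAt_id z).mul_const γ).const_add (y*α))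
    exact h.deriv
  -- ζ derivatives
  have dζ2 : deriv (fun t => ζ x t z) y = 0 := by
    have : (fun t => ζ x t z) = fun _ => α ^ ((2:ℝ)/3) * ζt ((1+x) * s / α) :=
      funext fun t => hζ x t z
    rw [this]; exact deriv_const _ _
  have dζ3 : deriv (fun t => ζ x y t) z = 0 := by
    have : (fun t => ζ x y t) = fun _ => α ^ ((2:ℝ)/3) * ζt ((1+x) * s / α) :=
      funext fun t => hζ x y t
    rw [this]; exact deriv_const _ _
  have dζ1 : deriv (fun t => ζ t y z) x = α ^ ((2:ℝ)/3) * (deriv ζt ρ * (s/α)) := by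
    have heq : (fun t => ζ t y z) = fun t => α ^ ((2:ℝ)/3) * ζt ((1+t) * s / α) :=
      funext fun t => hζ t y z
    rw [heq]
    have h1 : HasDerivAt (fun t : ℝ => (1+t) * s / α) (s/α) x := by
      have := (((hasDerivAt_id x).const_add 1).mul_const s).div_const α
      simpa using this
    have h2 : HasDerivAt (fun t : ℝ => α ^ ((2:ℝ)/3) * ζt ((1+t) * s / α))
        (α ^ ((2:ℝ)/3) * (deriv ζt ρ * (s/α))) x := by
      exact (((hdiff ρ).hasDerivAt.comp x h1).const_mul _)
    exact h2.deriv
  have hζv : ζ x y z = α ^ ((2:ℝ)/3) * ζt ρ := hζ x y z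
  have hode' := hode ρ hρ0
  have hs2 : s^2 = 1 - γ^2 := Real.sq_sqrt (by linarith)
  have hαpow : α ^ ((2:ℝ)/3) * (α ^ ((2:ℝ)/3))^2 = α^2 := by
    rw [sq, ← Real.rpow_add hα, ← Real.rpow_add hα]
    norm_num
  have hρ2 : ρ^2 = (1+x)^2 * (1-γ^2) / α^2 := by
    rw [hρ, div_pow, mul_pow, hs2]
  have key : ζ x y z * (deriv (fun t => ζ t y z) x)^2 = (1-γ^2) * (1/ρ^2 - 1) := by
    rw [hζv, dζ1]
    have : ζt ρ * (deriv ζt ρ)^2 = 1/ρ^2 - 1 := by nlinarith [hode']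
    rw [show α ^ ((2:ℝ)/3) * ζt ρ * (α ^ ((2:ℝ)/3) * (deriv ζt ρ * (s/α)))^2
        = (α ^ ((2:ℝ)/3) * (α ^ ((2:ℝ)/3))^2) * (ζt ρ * (deriv ζt ρ)^2) * (s/α)^2 by ring,
      hαpow, this]
    have h : (s/α)^2 = (1-γ^2)/α^2 := by rw [div_pow, hs2]
    rw [h, show α^2 * (1/ρ^2 - 1) * ((1-γ^2)/α^2)
        = (α^2/α^2) * ((1-γ^2) * (1/ρ^2-1)) from by ring,
      div_self (by positivity), one_mul]
  constructor
  · rw [dι1, dι2, dι3, dζ2, dζ3]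
    have hd : ζ x y z * (deriv (fun t => ζ t y z) x ^ 2 + ((1+x)^2)⁻¹ * 0^2 + 0^2)
        = (1-γ^2)*(1/ρ^2-1) := by rw [← key]; ring
    rw [hd]
    have hne2 : (1-γ^2) ≠ 0 := by nlinarith
    have hr : (1-γ^2) * (1/ρ^2) = α^2/(1+x)^2 := by
      rw [hρ2]
      field_simp
    linear_combination -hr
  · rw [dι1, dζ2, dζ3]; ring
end

section
/- Let s > 1 and define Γ₀(α̃,s) = (1/2)[(y_+ + y_−)α̃ + φ(0,y_+,0,s) + φ(0,y_−,0,s)] where y_± = arcsin(α̃²/s ± √(1−α̃²)√(1−α̃²/s²)) and φ(0,y,0,s) = √(1 − 2s sin y + s²). Then Γ₀(1,s) = √(s²−1) + arcsin(1/s), ∂_{α̃}Γ₀(1,s) = arcsin(1/s), and ∂²_{α̃}Γ₀(1,s) = 1/√(s²−1). -/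
open Real Set

/-- Values and one-sided (left) derivatives at α̃ = 1 of
Γ₀(α̃,s) = ½[(y₊+y₋)α̃ + φ(0,y₊,0,s) + φ(0,y₋,0,s)]. -/
theorem stmt_9 (s : ℝ) (hs : 1 < s)
    (yp ym Γ : ℝ → ℝ)
    (hyp : ∀ a, yp a = Real.arcsin (a^2/s + Real.sqrt (1 - a^2) * Real.sqrt (1 - a^2/s^2)))
    (hym : ∀ a, ym a = Real.arcsin (a^2/s - Real.sqrt (1 - a^2) * Real.sqrt (1 - a^2/s^2)))
    (hΓ : ∀ a, Γ a = (1/2) * ((yp a + ym a) * a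
        + Real.sqrt (1 - 2*s*Real.sin (yp a) + s^2)
        + Real.sqrt (1 - 2*s*Real.sin (ym a) + s^2))) :
    Γ 1 = Real.sqrt (s^2 - 1) + Real.arcsin (1/s) ∧
    derivWithin Γ (Set.Iic 1) 1 = Real.arcsin (1/s) ∧
    derivWithin (derivWithin Γ (Set.Iic 1)) (Set.Iic 1) 1 = 1 / Real.sqrt (s^2 - 1) := by
  have hs0 : (0:ℝ) < s := lt_trans one_pos hs
  have hsne : s ≠ 0 := ne_of_gt hs0
  set G : ℝ → ℝ := fun x => x * Real.arcsin (x/s) + Real.sqrt (s^2 - x^2) with hG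
  -- sqrt identity
  have hsq : ∀ x : ℝ, Real.sqrt (s^2 - x^2) = s * Real.sqrt (1 - x^2/s^2) := by
    intro x
    have h1 : s^2 - x^2 = s^2 * (1 - x^2/s^2) := by field_simp
    rw [h1, Real.sqrt_mul (sq_nonneg s), Real.sqrt_sq hs0.le]
  -- Γ = G on Icc 0 1
  have hGam : ∀ x ∈ Icc (0:ℝ) 1, Γ x = G x := by
    intro x ⟨hx0, hx1⟩
    have hx2 : x^2 ≤ 1 := by nlinarith
    have hsx2 : x^2 < s^2 := by nlinarith
    have h1x : (0:ℝ) ≤ 1 - x^2 := by linarith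
    have hs2x : (0:ℝ) ≤ s^2 - x^2 := by linarith
    have hxs1 : x/s < 1 := (div_lt_one hs0).mpr (by linarith)
    have hxs0 : (0:ℝ) ≤ x/s := div_nonneg hx0 hs0.le
    set a := Real.arcsin x with ha
    set b := Real.arcsin (x/s) with hb
    have sin_a : Real.sin a = x := Real.sin_arcsin (by linarith) hx1
    have sin_b : Real.sin b = x/s := Real.sin_arcsin (by linarith) hxs1.le
    have cos_a : Real.cos a = Real.sqrt (1 - x^2) := Real.cos_arcsin x
    have cos_b : Real.cos b = Real.sqrt (1 - x^2/s^2) := by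
      rw [hb, Real.cos_arcsin, div_pow]
    have ha0 : 0 ≤ a := Real.arcsin_nonneg.mpr hx0
    have hb0 : 0 ≤ b := Real.arcsin_nonneg.mpr hxs0
    have ha2 : a ≤ π/2 := Real.arcsin_le_pi_div_two x
    have hb2 : b ≤ π/2 := Real.arcsin_le_pi_div_two _
    have hba : b ≤ a := Real.monotone_arcsin (div_le_self hx0 hs.le)
    -- sin values matching the arcsin arguments
    have eyp : x^2/s + Real.sqrt (1 - x^2) * Real.sqrt (1 - x^2/s^2)
        = Real.sin (π/2 - a + b) := by
      rw [show π/2 - a + b = π/2 - (a - b) by ring, Real.sin_pi_div_two_sub,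
        Real.cos_sub, cos_a, cos_b, sin_a, sin_b]
      ring
    have eym : x^2/s - Real.sqrt (1 - x^2) * Real.sqrt (1 - x^2/s^2)
        = Real.sin (a + b - π/2) := by
      rw [Real.sin_sub_pi_div_two, Real.cos_add, cos_a, cos_b, sin_a, sin_b]
      ring
    have hyp_eq : yp x = π/2 - a + b := by
      rw [hyp, eyp, Real.arcsin_sin (by linarith) (by linarith)]
    have hym_eq : ym x = a + b - π/2 := by
      rw [hym, eym, Real.arcsin_sin (by linarith) (by linarith)]
    have sinyp : Real.sin (yp x) = x^2/s + Real.sqrt (1 - x^2) * Real.sqrt (1 - x^2/s^2) := by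
      rw [hyp_eq, ← eyp]
    have sinym : Real.sin (ym x) = x^2/s - Real.sqrt (1 - x^2) * Real.sqrt (1 - x^2/s^2) := by
      rw [hym_eq, ← eym]
    have e1 : Real.sqrt (1 - x^2)^2 = 1 - x^2 := Real.sq_sqrt h1x
    have e2 : Real.sqrt (s^2 - x^2)^2 = s^2 - x^2 := Real.sq_sqrt hs2x
    have e3 : s * Real.sqrt (1 - x^2/s^2) = Real.sqrt (s^2 - x^2) := (hsq x).symm
    have hAB : Real.sqrt (1 - x^2) ≤ Real.sqrt (s^2 - x^2) :=
      Real.sqrt_le_sqrt (by nlinarith)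
    have keyp : 1 - 2*s*Real.sin (yp x) + s^2
        = (Real.sqrt (s^2 - x^2) - Real.sqrt (1 - x^2))^2 := by
      rw [sinyp]
      have expand : 1 - 2*s*(x^2/s + Real.sqrt (1 - x^2) * Real.sqrt (1 - x^2/s^2)) + s^2
          = 1 + s^2 - 2*x^2 - 2*Real.sqrt (1 - x^2) * (s * Real.sqrt (1 - x^2/s^2)) := by
        field_simp; ring
      rw [expand, e3]
      linear_combination -e1 - e2
    have keym : 1 - 2*s*Real.sin (ym x) + s^2
        = (Real.sqrt (s^2 - x^2) + Real.sqrt (1 - x^2))^2 := by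
      rw [sinym]
      have expand : 1 - 2*s*(x^2/s - Real.sqrt (1 - x^2) * Real.sqrt (1 - x^2/s^2)) + s^2
          = 1 + s^2 - 2*x^2 + 2*Real.sqrt (1 - x^2) * (s * Real.sqrt (1 - x^2/s^2)) := by
        field_simp; ring
      rw [expand, e3]
      linear_combination -e1 - e2
    have φp : Real.sqrt (1 - 2*s*Real.sin (yp x) + s^2)
        = Real.sqrt (s^2 - x^2) - Real.sqrt (1 - x^2) := by
      rw [keyp, Real.sqrt_sq (by linarith)]
    have φm : Real.sqrt (1 - 2*s*Real.sin (ym x) + s^2)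
        = Real.sqrt (s^2 - x^2) + Real.sqrt (1 - x^2) := by
      rw [keym, Real.sqrt_sq (by positivity)]
    rw [hΓ, φp, φm, hyp_eq, hym_eq]
    simp only [hG]
    ring
  -- derivative of G
  have hDG : ∀ x ∈ Icc (0:ℝ) 1, HasDerivAt G (Real.arcsin (x/s)) x := by
    intro x ⟨hx0, hx1⟩
    have hsx2 : x^2 < s^2 := by nlinarith
    have hxs1 : x/s < 1 := (div_lt_one hs0).mpr (by linarith)
    have hxs0 : (0:ℝ) ≤ x/s := div_nonneg hx0 hs0.le
    have hA : 0 < Real.sqrt (s^2 - x^2) := Real.sqrt_pos.mpr (by linarith)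
    have h1 : HasDerivAt (fun y : ℝ => y / s) (1/s) x := (hasDerivAt_id x).div_const s
    have h2 : HasDerivAt Real.arcsin (1 / Real.sqrt (1 - (x/s)^2)) (x/s) :=
      Real.hasDerivAt_arcsin (ne_of_gt (lt_of_lt_of_le (by norm_num) hxs0)) (ne_of_lt hxs1)
    have h3 := h2.comp x h1
    have h4 : HasDerivAt (fun y : ℝ => y * Real.arcsin (y/s))
        (1 * Real.arcsin (x/s) + x * (1 / Real.sqrt (1 - (x/s)^2) * (1/s))) x :=
      (hasDerivAt_id x).mul h3
    have hpow : HasDerivAt (fun y : ℝ => y^2) (2*x) x := by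
      simpa using hasDerivAt_pow 2 x
    have hsub : HasDerivAt (fun y : ℝ => s^2 - y^2) (0 - 2*x) x :=
      (hasDerivAt_const x (s^2)).sub hpow
    have hsqrt : HasDerivAt (fun y : ℝ => Real.sqrt (s^2 - y^2))
        (1 / (2 * Real.sqrt (s^2 - x^2)) * (0 - 2*x)) x :=
      (Real.hasDerivAt_sqrt (by linarith)).comp x hsub
    have h6 := h4.add hsqrt
    have hval : 1 * Real.arcsin (x/s) + x * (1 / Real.sqrt (1 - (x/s)^2) * (1/s))
        + 1 / (2 * Real.sqrt (s^2 - x^2)) * (0 - 2*x) = Real.arcsin (x/s) := by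
      have hB : Real.sqrt (1 - (x/s)^2) = Real.sqrt (s^2 - x^2) / s := by
        rw [div_pow, eq_div_iff hsne, mul_comm, hsq x]
      rw [hB]
      field_simp
      ring
    rw [hG]
    exact hval ▸ h6
  have hUD : UniqueDiffWithinAt ℝ (Iic (1:ℝ)) 1 := uniqueDiffOn_Iic 1 1 (self_mem_Iic)
  have hmem : Ioc (0:ℝ) 1 ∈ nhdsWithin 1 (Iic 1) :=
    Ioc_mem_nhdsLE_of_mem ⟨one_pos, le_refl 1⟩
  have hEq : Γ =ᶠ[nhdsWithin 1 (Iic 1)] G :=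
    Filter.eventuallyEq_of_mem hmem (fun x hx => hGam x ⟨hx.1.le, hx.2⟩)
  have hΓ1 : Γ 1 = G 1 := hGam 1 ⟨zero_le_one, le_refl 1⟩
  have part1 : Γ 1 = Real.sqrt (s^2 - 1) + Real.arcsin (1/s) := by
    rw [hΓ1, hG]; norm_num [add_comm]
  have hd1 : derivWithin Γ (Iic 1) 1 = Real.arcsin (1/s) := by
    rw [hEq.derivWithin_eq hΓ1,
      ((hDG 1 ⟨zero_le_one, le_refl 1⟩).hasDerivWithinAt).derivWithin hUD]
  have hd_ev : derivWithin Γ (Iic 1) =ᶠ[nhdsWithin 1 (Iic 1)]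
      fun x => Real.arcsin (x/s) := by
    filter_upwards [hmem] with x hx
    rcases eq_or_lt_of_le hx.2 with h1 | h1
    · rw [h1]; exact hd1
    · have hnx : Iic (1:ℝ) ∈ nhds x := Iic_mem_nhds h1
      rw [derivWithin_of_mem_nhds hnx]
      have hev : Γ =ᶠ[nhds x] G := by
        filter_upwards [Ioo_mem_nhds hx.1 h1] with y hy
        exact hGam y ⟨hy.1.le, hy.2.le⟩
      rw [hev.deriv_eq, (hDG x ⟨hx.1.le, hx.2⟩).deriv]
  have harc : HasDerivAt (fun x : ℝ => Real.arcsin (x/s)) (1 / Real.sqrt (s^2 - 1)) 1 := by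
    have h1 : HasDerivAt (fun y : ℝ => y / s) (1/s) 1 := (hasDerivAt_id 1).div_const s
    have h1s : (1:ℝ)/s < 1 := (div_lt_one hs0).mpr hs
    have h2 : HasDerivAt Real.arcsin (1 / Real.sqrt (1 - (1/s)^2)) (1/s) :=
      Real.hasDerivAt_arcsin (ne_of_gt (by have := one_div_pos.mpr hs0; linarith)) (ne_of_lt h1s)
    have h3 := h2.comp 1 h1
    have hA : 0 < Real.sqrt (s^2 - 1) := Real.sqrt_pos.mpr (by nlinarith)
    have hB : Real.sqrt (1 - (1/s)^2) = Real.sqrt (s^2 - 1) / s := by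
      rw [div_pow, one_pow, eq_div_iff hsne, mul_comm]
      rw [show s^2 - 1 = s^2 - 1^2 by norm_num, hsq 1, one_pow]
    have hval : 1 / Real.sqrt (1 - (1/s)^2) * (1/s) = 1 / Real.sqrt (s^2 - 1) := by
      rw [hB]
      field_simp
    exact hval ▸ h3
  refine ⟨part1, hd1, ?_⟩
  rw [hd_ev.derivWithin_eq hd1, harc.hasDerivWithinAt.derivWithin hUD]
end

section
/- For s > 1 and α̃ in a neighborhood of 1 with 0 < α̃ ≤ 1, let y_± = arcsin(Z_±) with Z_± = α̃²/s ± √(1−α̃²)√(1−α̃²/s²). Then (1/2)·d/dα̃ (y_+ + y_−) = (α̃/s)(1/√(1−Z_+²) + 1/√(1−Z_−²)) − (2α̃³(s²+1−2α̃²))/(s³ √(1−Z_+²) √(1−Z_−²) (√(1−Z_+²) + √(1−Z_−²))), and its value at α̃ = 1 equals 1/√(s²−1). -/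
set_option maxHeartbeats 1000000

open Real Set Filter

/-- Formula for ½ d/dα̃ (y₊ + y₋) near α̃ = 1, and its limit 1/√(s²−1) at α̃ = 1. -/
theorem stmt_18 (s : ℝ) (hs : 1 < s)
    (Zp Zm yp ym R : ℝ → ℝ)
    (hZp : ∀ a, Zp a = a^2/s + Real.sqrt (1 - a^2) * Real.sqrt (1 - a^2/s^2))
    (hZm : ∀ a, Zm a = a^2/s - Real.sqrt (1 - a^2) * Real.sqrt (1 - a^2/s^2))
    (hyp : ∀ a, yp a = Real.arcsin (Zp a))
    (hym : ∀ a, ym a = Real.arcsin (Zm a))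
    (hR : ∀ a, R a
      = (a/s) * (1/Real.sqrt (1 - (Zp a)^2) + 1/Real.sqrt (1 - (Zm a)^2))
        - (2*a^3*(s^2 + 1 - 2*a^2))
          / (s^3 * Real.sqrt (1 - (Zp a)^2) * Real.sqrt (1 - (Zm a)^2)
              * (Real.sqrt (1 - (Zp a)^2) + Real.sqrt (1 - (Zm a)^2)))) :
    (∃ δ > (0:ℝ), ∀ a ∈ Set.Ioo (1 - δ) (1:ℝ),
      deriv (fun t => (yp t + ym t)/2) a = R a) ∧
    Filter.Tendsto R (nhdsWithin 1 (Set.Iio 1)) (nhds (1/Real.sqrt (s^2 - 1))) := by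
  have hs0 : (0:ℝ) < s := by linarith
  have hs0' : s ≠ 0 := ne_of_gt hs0
  have hs2 : (0:ℝ) < s^2 - 1 := by nlinarith
  -- closed form for R on (1/2, 1]
  have hRval : ∀ a : ℝ, 1/2 < a → a ≤ 1 → R a = 1/(s*Real.sqrt (1 - a^2/s^2)) := by
    intro a ha1 ha2
    have ha0 : 0 < a := by linarith
    have h1a : (0:ℝ) ≤ 1 - a^2 := by nlinarith
    have h2a : (0:ℝ) < 1 - a^2/s^2 := by
      have hss : a^2/s^2 < 1 := (div_lt_one (by positivity)).mpr (by nlinarith)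
      linarith
    set w1 := Real.sqrt (1 - a^2) with hw1def
    set w2 := Real.sqrt (1 - a^2/s^2) with hw2def
    have hw1nn : 0 ≤ w1 := Real.sqrt_nonneg _
    have hw2pos : 0 < w2 := Real.sqrt_pos.mpr h2a
    have hw1sq : w1^2 = 1 - a^2 := Real.sq_sqrt h1a
    have hw2sq : w2^2 = 1 - a^2/s^2 := Real.sq_sqrt h2a.le
    have hkey : w1/s < w2 := by
      apply lt_of_pow_lt_pow_left₀ 2 hw2pos.le
      rw [div_pow, hw1sq, hw2sq, div_lt_iff₀ (by positivity : (0:ℝ) < s^2)]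
      have hss : (1 - a^2/s^2)*s^2 = s^2 - a^2 := by field_simp
      rw [hss]; nlinarith
    have hppos : 0 < a*(w2 - w1/s) := mul_pos ha0 (by linarith)
    have hmpos : 0 < a*(w2 + w1/s) :=
      mul_pos ha0 (add_pos_of_pos_of_nonneg hw2pos (by positivity))
    have hw2sq2 : s^2*w2^2 = s^2 - a^2 := by rw [hw2sq]; field_simp
    have hprod : w1^2*w2^2 = (1 - a^2)*(1 - a^2/s^2) := by rw [hw1sq, hw2sq]
    have hPsq : 1 - (Zp a)^2 = (a*(w2 - w1/s))^2 := by
      rw [hZp a]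
      linear_combination (-1 : ℝ)*hprod + (-(a^2))*hw2sq + (-(a^2)/s^2)*hw1sq
    have hMsq : 1 - (Zm a)^2 = (a*(w2 + w1/s))^2 := by
      rw [hZm a]
      linear_combination (-1 : ℝ)*hprod + (-(a^2))*hw2sq + (-(a^2)/s^2)*hw1sq
    have hP : Real.sqrt (1 - (Zp a)^2) = a*(w2 - w1/s) := by
      rw [hPsq, Real.sqrt_sq hppos.le]
    have hM : Real.sqrt (1 - (Zm a)^2) = a*(w2 + w1/s) := by
      rw [hMsq, Real.sqrt_sq hmpos.le]
    rw [hR a, hP, hM]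
    have e1 : 1/(a*(w2 - w1/s)) + 1/(a*(w2 + w1/s)) = 2*s^2*w2/(a*(s^2-1)) := by
      rw [div_add_div _ _ (ne_of_gt hppos) (ne_of_gt hmpos),
        div_eq_div_iff (by positivity) (by positivity)]
      field_simp
      linear_combination (2*w2*s)*hw1sq - (2*w2*s)*hw2sq2
    have e2 : s^3*(a*(w2 - w1/s))*(a*(w2 + w1/s))*(a*(w2 - w1/s) + a*(w2 + w1/s))
        = 2*s*a^3*(s^2-1)*w2 := by
      field_simp
      linear_combination (-2*s*w2)*hw1sq + (2*s*w2)*hw2sq2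
    rw [e1, e2]
    field_simp
    linear_combination (2:ℝ)*hw2sq2
  constructor
  · refine ⟨1/2, by norm_num, ?_⟩
    rintro a ⟨ha1, ha2⟩
    have ha1' : 1/2 < a := by norm_num at ha1; linarith
    have ha0 : 0 < a := by linarith
    have h1a : (0:ℝ) < 1 - a^2 := by nlinarith
    have h2a : (0:ℝ) < 1 - a^2/s^2 := by
      have hss : a^2/s^2 < 1 := (div_lt_one (by positivity)).mpr (by nlinarith)
      linarith
    set w1 := Real.sqrt (1 - a^2) with hw1def
    set w2 := Real.sqrt (1 - a^2/s^2) with hw2def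
    have hw1pos : 0 < w1 := Real.sqrt_pos.mpr h1a
    have hw2pos : 0 < w2 := Real.sqrt_pos.mpr h2a
    have hw1sq : w1^2 = 1 - a^2 := Real.sq_sqrt h1a.le
    have hw2sq : w2^2 = 1 - a^2/s^2 := Real.sq_sqrt h2a.le
    have hkey : w1/s < w2 := by
      apply lt_of_pow_lt_pow_left₀ 2 hw2pos.le
      rw [div_pow, hw1sq, hw2sq, div_lt_iff₀ (by positivity : (0:ℝ) < s^2)]
      have hss : (1 - a^2/s^2)*s^2 = s^2 - a^2 := by field_simp
      rw [hss]; nlinarith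
    have hppos : 0 < a*(w2 - w1/s) := mul_pos ha0 (by linarith)
    have hmpos : 0 < a*(w2 + w1/s) := mul_pos ha0 (by positivity)
    have hprod : w1^2*w2^2 = (1 - a^2)*(1 - a^2/s^2) := by rw [hw1sq, hw2sq]
    have hPsq : 1 - (Zp a)^2 = (a*(w2 - w1/s))^2 := by
      rw [hZp a]
      linear_combination (-1 : ℝ)*hprod + (-(a^2))*hw2sq + (-(a^2)/s^2)*hw1sq
    have hMsq : 1 - (Zm a)^2 = (a*(w2 + w1/s))^2 := by
      rw [hZm a]
      linear_combination (-1 : ℝ)*hprod + (-(a^2))*hw2sq + (-(a^2)/s^2)*hw1sq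
    have hP : Real.sqrt (1 - (Zp a)^2) = a*(w2 - w1/s) := by
      rw [hPsq, Real.sqrt_sq hppos.le]
    have hM : Real.sqrt (1 - (Zm a)^2) = a*(w2 + w1/s) := by
      rw [hMsq, Real.sqrt_sq hmpos.le]
    have hPpos : 0 < 1 - (Zp a)^2 := by rw [hPsq]; positivity
    have hMpos : 0 < 1 - (Zm a)^2 := by rw [hMsq]; positivity
    have hzp1 : Zp a ≠ 1 := by intro h; rw [h] at hPpos; norm_num at hPpos
    have hzp2 : Zp a ≠ -1 := by intro h; rw [h] at hPpos; norm_num at hPpos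
    have hzm1 : Zm a ≠ 1 := by intro h; rw [h] at hMpos; norm_num at hMpos
    have hzm2 : Zm a ≠ -1 := by intro h; rw [h] at hMpos; norm_num at hMpos
    have hd1 : HasDerivAt (fun t : ℝ => t^2/s) (2*a/s) a := by
      simpa using (hasDerivAt_pow 2 a).div_const s
    have hin1 : HasDerivAt (fun t : ℝ => 1 - t^2) (-(2*a)) a := by
      simpa using (hasDerivAt_pow 2 a).const_sub 1
    have hin2 : HasDerivAt (fun t : ℝ => 1 - t^2/s^2) (-(2*a/s^2)) a := by
      simpa using ((hasDerivAt_pow 2 a).div_const (s^2)).const_sub 1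
    have hW1 : HasDerivAt (fun t : ℝ => Real.sqrt (1 - t^2)) (-(2*a) / (2*w1)) a :=
      hin1.sqrt (ne_of_gt h1a)
    have hW2 : HasDerivAt (fun t : ℝ => Real.sqrt (1 - t^2/s^2)) (-(2*a/s^2) / (2*w2)) a :=
      hin2.sqrt (ne_of_gt h2a)
    have hZpd' : HasDerivAt Zp
        (2*a/s + ((-(2*a) / (2*w1)) * w2 + w1 * (-(2*a/s^2) / (2*w2)))) a := by
      have h : Zp = fun t : ℝ => t^2/s + Real.sqrt (1 - t^2) * Real.sqrt (1 - t^2/s^2) :=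
        funext hZp
      rw [h]; exact hd1.add (hW1.mul hW2)
    have hZmd' : HasDerivAt Zm
        (2*a/s - ((-(2*a) / (2*w1)) * w2 + w1 * (-(2*a/s^2) / (2*w2)))) a := by
      have h : Zm = fun t : ℝ => t^2/s - Real.sqrt (1 - t^2) * Real.sqrt (1 - t^2/s^2) :=
        funext hZm
      rw [h]; exact hd1.sub (hW1.mul hW2)
    have hypd : HasDerivAt yp
        (1 / Real.sqrt (1 - (Zp a)^2) *
          (2*a/s + ((-(2*a) / (2*w1)) * w2 + w1 * (-(2*a/s^2) / (2*w2))))) a := by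
      have h : yp = fun t => Real.arcsin (Zp t) := funext hyp
      rw [h]; exact (Real.hasDerivAt_arcsin hzp2 hzp1).comp a hZpd'
    have hymd : HasDerivAt ym
        (1 / Real.sqrt (1 - (Zm a)^2) *
          (2*a/s - ((-(2*a) / (2*w1)) * w2 + w1 * (-(2*a/s^2) / (2*w2))))) a := by
      have h : ym = fun t => Real.arcsin (Zm t) := funext hym
      rw [h]; exact (Real.hasDerivAt_arcsin hzm2 hzm1).comp a hZmd'
    have htot := (hypd.add hymd).div_const 2
    rw [show deriv (fun t => (yp t + ym t)/2) a = _ from htot.deriv, hRval a ha1' ha2.le, hP, hM]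
    simp only [← hw2def]
    have hne1 : w2 - w1/s ≠ 0 := by linarith
    have hne2 : w2 + w1/s ≠ 0 := by positivity
    have hsw : s*w2 - w1 ≠ 0 := by
      have : w1 < w2*s := (div_lt_iff₀ hs0).mp hkey
      intro h; nlinarith
    have hdzp : 2*a/s + (-(2*a) / (2*w1) * w2 + w1 * (-(2*a/s^2) / (2*w2)))
        = -(a*(s*w2 - w1)^2)/(s^2*w1*w2) := by
      field_simp
      ring
    have hdzm : 2*a/s - (-(2*a) / (2*w1) * w2 + w1 * (-(2*a/s^2) / (2*w2)))
        = (a*(s*w2 + w1)^2)/(s^2*w1*w2) := by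
      field_simp
      ring
    have hsw2 : s*w2 + w1 ≠ 0 := by positivity
    have hp2 : a*(w2 - w1/s) = a*(s*w2 - w1)/s := by field_simp
    have hm2 : a*(w2 + w1/s) = a*(s*w2 + w1)/s := by field_simp
    rw [hdzp, hdzm, hp2, hm2]
    field_simp [ha0.ne', hs0', hw1pos.ne', hw2pos.ne', hsw, hsw2]
    linear_combination (0:ℝ)*hw1sq
  · have hval : s * Real.sqrt (1 - 1^2/s^2) = Real.sqrt (s^2 - 1) := by
      rw [show (1 - 1^2/s^2 : ℝ) = (s^2-1)/s^2 by field_simp,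
        Real.sqrt_div (by nlinarith : (0:ℝ) ≤ s^2 - 1), Real.sqrt_sq hs0.le]
      field_simp
    have hcont : ContinuousAt (fun a : ℝ => 1/(s*Real.sqrt (1 - a^2/s^2))) 1 := by
      apply ContinuousAt.div continuousAt_const
      · exact continuousAt_const.mul
          ((Real.continuous_sqrt.continuousAt).comp (by fun_prop))
      · rw [hval]
        positivity
    have hg : Filter.Tendsto (fun a : ℝ => 1/(s*Real.sqrt (1 - a^2/s^2)))
        (nhdsWithin 1 (Set.Iio 1)) (nhds (1/Real.sqrt (s^2 - 1))) := by
      have := hcont.tendsto.mono_left (nhdsWithin_le_nhds (s := Set.Iio 1))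
      rwa [hval] at this
    apply hg.congr'
    have hmem : Set.Ioo (1/2 : ℝ) 1 ∈ nhdsWithin (1:ℝ) (Set.Iio 1) :=
      Ioo_mem_nhdsLT_of_mem (by norm_num)
    filter_upwards [hmem] with x hx
    exact (hRval x hx.1 hx.2.le).symm
end
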